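/- For all t > 0 and all f ∈ H¹(ℝ²), one has ‖e^{tΔ}f‖_{L^∞(ℝ²)} ≤ (e^t / (2√π)) (E₁(2t))^{1/2} ‖f‖_{H¹(ℝ²)}, where E₁(τ) = ∫_τ^∞ e^{-ρ}/ρ dρ is the exponential integral. -/

import Mathlib

open MeasureTheory Real Set

noncomputable section

abbrev R2 := EuclideanSpace ℝ (Fin 2)

/-- Fourier transform on ℝ² with normalization (2π)⁻¹ ∫ e^{-ix·ξ} f(x) dx. -/
def FT (f : R2 → ℂ) (ξ : R2) : ℂ :=
  (1 / (2 * (π : ℂ))) * ∫ x : R2, Complex.exp (-Complex.I * ((inner ℝ x ξ : ℝ) : ℂ)) * f x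

/-- Inverse Fourier transform. -/
def invFT (g : R2 → ℂ) (x : R2) : ℂ :=
  (1 / (2 * (π : ℂ))) * ∫ ξ : R2, Complex.exp (Complex.I * ((inner ℝ x ξ : ℝ) : ℂ)) * g ξ

/-- Heat semigroup e^{tΔ} = 𝓕⁻¹ e^{-t|ξ|²} 𝓕. -/
def heat (t : ℝ) (f : R2 → ℂ) : R2 → ℂ :=
  invFT (fun ξ => Complex.exp (-(t : ℂ) * (‖ξ‖ : ℂ) ^ 2) * FT f ξ)

/-- H¹ norm via the Fourier transform. -/
def H1norm (f : R2 → ℂ) : ℝ :=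
  (∫ ξ : R2, (1 + ‖ξ‖ ^ 2) * ‖FT f ξ‖ ^ 2) ^ (1 / 2 : ℝ)

/-- Membership in H¹(ℝ²). -/
def MemH1 (f : R2 → ℂ) : Prop :=
  MemLp f 2 volume ∧ Integrable (fun ξ : R2 => (1 + ‖ξ‖ ^ 2) * ‖FT f ξ‖ ^ 2)

/-- Exponential integral E₁. -/
def E1 (τ : ℝ) : ℝ := ∫ ρ in Ioi τ, Real.exp (-ρ) / ρ

/-!
Pointwise, `|e^{tΔ}f(x)| ≤ (2π)⁻¹ ∫ e^{-t|ξ|²} |𝓕f(ξ)| dξ`, and Cauchy–Schwarz against the weight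
`1 + |ξ|²` bounds this by `(2π)⁻¹ ‖f‖_{H¹}` times the square root of
`∫ e^{-2t|ξ|²} / (1 + |ξ|²) dξ`. In polar coordinates, and after the substitution
`ρ = 2t(1 + r²)`, that integral equals `π e^{2t} E₁(2t)`.
-/

section CauchySchwarz

variable {α : Type*} [MeasurableSpace α] {μ : Measure α}

theorem integral_mul_le_sqrt_mul_sqrt {F G : α → ℝ} (hF : 0 ≤ᵐ[μ] F) (hG : 0 ≤ᵐ[μ] G)
    (hF2 : MemLp F 2 μ) (hG2 : MemLp G 2 μ) :
    ∫ x, F x * G x ∂μ ≤ √(∫ x, F x ^ 2 ∂μ) * √(∫ x, G x ^ 2 ∂μ) := by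
  have h := integral_mul_le_Lp_mul_Lq_of_nonneg Real.HolderConjugate.two_two hF hG
    (by simpa using hF2) (by simpa using hG2)
  simpa only [Real.rpow_two, ← Real.sqrt_eq_rpow] using h

theorem MeasureTheory.Integrable.memLp_two_sqrt {g : α → ℝ} (hg : Integrable g μ) :
    MemLp (fun x => √(g x)) 2 μ :=
  (memLp_two_iff_integrable_sq
    (Real.continuous_sqrt.comp_aestronglyMeasurable hg.aestronglyMeasurable)).2
    (by simpa only [Real.sq_sqrt'] using hg.pos_part)

theorem integral_mul_le_sqrt_mul_sqrt_of_weight {w u v : α → ℝ} (hw : ∀ x, 0 < w x)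
    (hu : ∀ x, 0 ≤ u x) (hv : ∀ x, 0 ≤ v x) (hu2 : Integrable (fun x => u x ^ 2 / w x) μ)
    (hv2 : Integrable (fun x => w x * v x ^ 2) μ) :
    ∫ x, u x * v x ∂μ ≤ √(∫ x, u x ^ 2 / w x ∂μ) * √(∫ x, w x * v x ^ 2 ∂μ) := by
  have h := integral_mul_le_sqrt_mul_sqrt (ae_of_all μ fun x => Real.sqrt_nonneg _)
    (ae_of_all μ fun x => Real.sqrt_nonneg _) hu2.memLp_two_sqrt hv2.memLp_two_sqrt
  have hprod : ∀ x, √(u x ^ 2 / w x) * √(w x * v x ^ 2) = u x * v x := fun x => by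
    have hw0 := (hw x).ne'
    rw [← Real.sqrt_mul (div_nonneg (sq_nonneg _) (hw x).le),
      show u x ^ 2 / w x * (w x * v x ^ 2) = (u x * v x) ^ 2 by field_simp,
      Real.sqrt_sq (mul_nonneg (hu x) (hv x))]
  have hsq_u : ∀ x, √(u x ^ 2 / w x) ^ 2 = u x ^ 2 / w x := fun x =>
    Real.sq_sqrt (div_nonneg (sq_nonneg _) (hw x).le)
  have hsq_v : ∀ x, √(w x * v x ^ 2) ^ 2 = w x * v x ^ 2 := fun x =>
    Real.sq_sqrt (mul_nonneg (hw x).le (sq_nonneg _))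
  simpa only [hprod, hsq_u, hsq_v] using h

end CauchySchwarz

section Gaussian

variable {V : Type*} [NormedAddCommGroup V] [InnerProductSpace ℝ V] [FiniteDimensional ℝ V]
  [MeasurableSpace V] [BorelSpace V] {b : ℝ}

theorem integrable_exp_neg_mul_sq_norm (hb : 0 < b) :
    Integrable (fun v : V => exp (-b * ‖v‖ ^ 2)) := by
  refine (GaussianFourier.integrable_cexp_neg_mul_sq_norm_add (V := V) (b := b)
    (by simpa using hb) 0 0).norm.congr (ae_of_all _ fun v => ?_)
  simp [Complex.norm_exp, ← Complex.ofReal_pow]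

theorem integrable_exp_neg_mul_sq_norm_div_one_add_sq_norm (hb : 0 < b) :
    Integrable (fun v : V => exp (-b * ‖v‖ ^ 2) / (1 + ‖v‖ ^ 2)) := by
  refine (integrable_exp_neg_mul_sq_norm hb).mono
    ((by fun_prop : Continuous _).div (by fun_prop) fun v => by positivity).aestronglyMeasurable
    (ae_of_all _ fun v => ?_)
  rw [Real.norm_of_nonneg (by positivity), Real.norm_of_nonneg (exp_pos _).le]
  exact div_le_self (exp_pos _).le (le_add_of_nonneg_right (sq_nonneg _))

end Gaussian

theorem image_mul_one_add_sq_Ioi {b : ℝ} (hb : 0 < b) :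
    (fun r : ℝ => b * (1 + r ^ 2)) '' Ioi 0 = Ioi b := by
  ext ρ
  constructor
  · rintro ⟨r, hr, rfl⟩
    simp only [mem_Ioi] at hr ⊢
    nlinarith [mul_pos hb (pow_pos hr 2)]
  · intro hρ
    simp only [mem_Ioi] at hρ
    refine ⟨√(ρ / b - 1), Real.sqrt_pos.2 ?_, ?_⟩
    · rw [sub_pos, lt_div_iff₀ hb]
      linarith
    · simp only
      rw [Real.sq_sqrt (by rw [sub_nonneg, le_div_iff₀ hb]; linarith)]
      field_simp
      ring

theorem integral_Ioi_mul_exp_neg_mul_sq_div {b : ℝ} (hb : 0 < b) :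
    ∫ r in Ioi (0 : ℝ), r * (exp (-b * r ^ 2) / (1 + r ^ 2)) = exp b * E1 b / 2 := by
  have hderiv : ∀ r ∈ Ioi (0 : ℝ),
      HasDerivWithinAt (fun r : ℝ => b * (1 + r ^ 2)) (2 * b * r) (Ioi 0) r := fun r _ =>
    (((hasDerivAt_pow 2 r).const_add 1).const_mul b).hasDerivWithinAt.congr_deriv (by ring)
  have hinj : InjOn (fun r : ℝ => b * (1 + r ^ 2)) (Ioi 0) := fun r hr s hs hrs => by
    have := mul_left_cancel₀ hb.ne' hrs
    exact (sq_eq_sq₀ hr.le hs.le).1 (by linarith)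
  have key := integral_image_eq_integral_abs_deriv_smul measurableSet_Ioi hderiv hinj
    (fun ρ => exp (-ρ) / ρ)
  rw [image_mul_one_add_sq_Ioi hb] at key
  rw [eq_div_iff two_ne_zero, E1, key, mul_comm, ← integral_const_mul, ← integral_const_mul]
  refine setIntegral_congr_fun measurableSet_Ioi fun r (hr : 0 < r) => ?_
  rw [smul_eq_mul, abs_of_pos (by positivity), show -(b * (1 + r ^ 2)) = -b + -b * r ^ 2 by ring,
    Real.exp_add, Real.exp_neg]
  field_simp

theorem integral_exp_neg_mul_sq_norm_div_one_add_sq_norm {b : ℝ} (hb : 0 < b) :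
    ∫ ξ : R2, exp (-b * ‖ξ‖ ^ 2) / (1 + ‖ξ‖ ^ 2) = π * exp b * E1 b := by
  have hball : volume.real (Metric.ball (0 : R2) 1) = π := by
    rw [measureReal_def, EuclideanSpace.volume_ball]
    norm_num [Real.Gamma_two, Real.sq_sqrt Real.pi_pos.le, Real.pi_pos.le]
  rw [integral_fun_norm_addHaar volume (fun y => exp (-b * y ^ 2) / (1 + y ^ 2)),
    finrank_euclideanSpace, Fintype.card_fin, hball]
  simp only [Nat.add_one_sub_one, pow_one, smul_eq_mul, nsmul_eq_mul, Nat.cast_ofNat,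
    integral_Ioi_mul_exp_neg_mul_sq_div hb]
  ring

theorem norm_invFT_le (g : R2 → ℂ) (x : R2) : ‖invFT g x‖ ≤ (2 * π)⁻¹ * ∫ ξ, ‖g ξ‖ := by
  rw [invFT, norm_mul, one_div, norm_inv, norm_mul, Complex.norm_ofNat, Complex.norm_real,
    Real.norm_of_nonneg pi_pos.le]
  gcongr
  refine (norm_integral_le_integral_norm _).trans_eq (integral_congr_ae (ae_of_all _ fun ξ => ?_))
  simp [Complex.norm_exp]

theorem norm_heat_le (t : ℝ) (f : R2 → ℂ) (x : R2) :
    ‖heat t f x‖ ≤ (2 * π)⁻¹ * ∫ ξ, exp (-t * ‖ξ‖ ^ 2) * ‖FT f ξ‖ := by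
  refine (norm_invFT_le _ x).trans_eq ?_
  congr 2 with ξ
  rw [norm_mul, ← Complex.ofReal_pow, ← Complex.ofReal_neg, ← Complex.ofReal_mul,
    Complex.norm_exp_ofReal]

theorem inv_two_pi_mul_sqrt_pi_mul_exp_mul (t E : ℝ) :
    (2 * π)⁻¹ * √(π * exp (2 * t) * E) = exp t / (2 * √π) * √E := by
  rw [Real.sqrt_mul (by positivity), Real.sqrt_mul pi_pos.le,
    show exp (2 * t) = exp t * exp t by rw [← Real.exp_add, two_mul],
    Real.sqrt_mul_self (exp_pos t).le]
  field_simp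
  rw [Real.sq_sqrt pi_pos.le]

theorem stmt1 (t : ℝ) (ht : 0 < t) (f : R2 → ℂ) (hf : MemH1 f) :
    eLpNorm (heat t f) ⊤ volume ≤
      ENNReal.ofReal (Real.exp t / (2 * Real.sqrt π) * Real.sqrt (E1 (2 * t)) * H1norm f) := by
  have hexp_sq : ∀ ξ : R2, exp (-t * ‖ξ‖ ^ 2) ^ 2 = exp (-(2 * t) * ‖ξ‖ ^ 2) := fun ξ => by
    rw [← Real.exp_nat_mul]
    ring_nf
  have hbound : ∀ x, ‖heat t f x‖ ≤ exp t / (2 * √π) * √(E1 (2 * t)) * H1norm f := fun x =>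
    calc ‖heat t f x‖ ≤ (2 * π)⁻¹ * ∫ ξ, exp (-t * ‖ξ‖ ^ 2) * ‖FT f ξ‖ := norm_heat_le t f x
      _ ≤ (2 * π)⁻¹ * (√(∫ ξ : R2, exp (-t * ‖ξ‖ ^ 2) ^ 2 / (1 + ‖ξ‖ ^ 2)) *
            √(∫ ξ : R2, (1 + ‖ξ‖ ^ 2) * ‖FT f ξ‖ ^ 2)) := by
        gcongr
        refine integral_mul_le_sqrt_mul_sqrt_of_weight (fun ξ => by positivity)
          (fun _ => (exp_pos _).le) (fun _ => norm_nonneg _) ?_ hf.2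
        simpa only [hexp_sq] using
          integrable_exp_neg_mul_sq_norm_div_one_add_sq_norm (V := R2) (by linarith : 0 < 2 * t)
      _ = exp t / (2 * √π) * √(E1 (2 * t)) * H1norm f := by
        simp only [hexp_sq]
        rw [integral_exp_neg_mul_sq_norm_div_one_add_sq_norm (by linarith), ← mul_assoc,
          inv_two_pi_mul_sqrt_pi_mul_exp_mul, H1norm, ← Real.sqrt_eq_rpow]
  rw [eLpNorm_exponent_top]
  exact eLpNormEssSup_le_of_ae_bound (ae_of_all _ hbound)
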